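/- arXiv:1207.5358 — 3 statements merged into one kernel-verified Lean document; each statement's English description precedes it below -/
import Mathlib

section
/- Let A : [0,∞) → M_m(ℝ) satisfy A' = F·A, A(0) = I with each A(t) invertible, G : [0,∞) → ℝ^m locally integrable, I₀(T) = ∫₀ᵀ G(t)·A(t) dt, and ψ⁰(T) = (ψ⁰(0) - I₀(T))·A(T)⁻¹. Suppose there is a subsequence (τ'ₙ) ↑ ∞ with ψ⁰(τ'ₙ)·A(τ'ₙ) → 0. Define ψₙ(t) = (I₀(τ'ₙ) - I₀(t))·A(t)⁻¹. Then ψₙ(τ'ₙ) = 0 for each n and ψₙ → ψ⁰ uniformly on every compact interval of [0,∞). -/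
open Matrix MeasureTheory Filter Topology intervalIntegral

/-- Lemma 3 (lem3): if ψ⁰(T) = (ψ⁰(0) - I₀(T))·A(T)⁻¹ and
ψ⁰(τ'ₙ)·A(τ'ₙ) → 0 along a subsequence τ'ₙ ↑ ∞, then the solutions
ψₙ(t) = (I₀(τ'ₙ) - I₀(t))·A(t)⁻¹ vanish at τ'ₙ and converge to ψ⁰
uniformly on every compact interval. -/
theorem stmt2 {m : ℕ}
    (F : ℝ → Matrix (Fin m) (Fin m) ℝ) (G : ℝ → Fin m → ℝ)
    (A : ℝ → Matrix (Fin m) (Fin m) ℝ)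
    (I0 : ℝ → Fin m → ℝ) (ψ0 : ℝ → Fin m → ℝ) (τ' : ℕ → ℝ)
    (hA : ∀ t, 0 ≤ t → ∀ i j, HasDerivAt (fun s => A s i j) ((F t * A t) i j) t)
    (hA0 : A 0 = 1)
    (hAinv : ∀ t, IsUnit (A t))
    (hAinv_cont : Continuous fun t => (A t)⁻¹)
    (hGint : ∀ T, IntervalIntegrable (fun t => G t ᵥ* A t) volume 0 T)
    (hI0 : ∀ T, I0 T = ∫ t in (0:ℝ)..T, G t ᵥ* A t)
    (hI0_cont : Continuous I0)
    (hψ0 : ∀ T, ψ0 T = (ψ0 0 - I0 T) ᵥ* (A T)⁻¹)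
    (hτ_mono : StrictMono τ') (hτ_pos : ∀ n, 0 ≤ τ' n)
    (hτ_top : Tendsto τ' atTop atTop)
    (hvan : Tendsto (fun n => ψ0 (τ' n) ᵥ* A (τ' n)) atTop (nhds 0)) :
    (∀ n, (I0 (τ' n) - I0 (τ' n)) ᵥ* (A (τ' n))⁻¹ = 0) ∧
      ∀ b : ℝ, TendstoUniformlyOn
        (fun n t => (I0 (τ' n) - I0 t) ᵥ* (A t)⁻¹) ψ0 atTop (Set.Icc 0 b) := by
  constructor
  · intro n
    simp
  · -- key: ψ0 (τ' n) ᵥ* A (τ' n) = ψ0 0 - I0 (τ' n)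
    have hdet : ∀ t, IsUnit (A t).det := fun t =>
      (Matrix.isUnit_iff_isUnit_det (A t)).mp (hAinv t)
    have hkey : ∀ n, ψ0 (τ' n) ᵥ* A (τ' n) = ψ0 0 - I0 (τ' n) := by
      intro n
      rw [hψ0 (τ' n), Matrix.vecMul_vecMul, Matrix.nonsing_inv_mul _ (hdet _),
        Matrix.vecMul_one]
    have hc : Tendsto (fun n => I0 (τ' n) - ψ0 0) atTop (nhds 0) := by
      have := hvan.neg
      simp only [hkey, neg_sub, neg_zero] at this
      exact this
    intro b
    -- continuous bound function
    set g : ℝ → ℝ := fun t => ∑ j : Fin m, ∑ i : Fin m, |(A t)⁻¹ i j| with hg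
    have hg_cont : Continuous g := by
      apply continuous_finset_sum
      intro j _
      apply continuous_finset_sum
      intro i _
      exact (hAinv_cont.matrix_elem i j).abs
    obtain ⟨C, hC⟩ := (isCompact_Icc (a := (0:ℝ)) (b := b)).exists_bound_of_continuousOn
      hg_cont.continuousOn
    set C' := max C 1 with hC'
    have hC'pos : 0 < C' := lt_of_lt_of_le one_pos (le_max_right _ _)
    rw [Metric.tendstoUniformlyOn_iff]
    intro ε hε
    have hεC : 0 < ε / C' := div_pos hε hC'pos
    filter_upwards [hc (Metric.ball_mem_nhds 0 hεC)] with n hn t ht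
    have hdiff : (I0 (τ' n) - I0 t) ᵥ* (A t)⁻¹ - ψ0 t
        = (I0 (τ' n) - ψ0 0) ᵥ* (A t)⁻¹ := by
      rw [hψ0 t, ← Matrix.sub_vecMul]
      congr 1
      abel
    rw [dist_comm, dist_eq_norm, hdiff]
    set c := I0 (τ' n) - ψ0 0 with hcdef
    have hcn : ‖c‖ < ε / C' := by
      simpa [dist_eq_norm] using hn
    have hbound : ‖c ᵥ* (A t)⁻¹‖ ≤ ‖c‖ * C' := by
      have hgt : g t ≤ C' := by
        have := hC t ht
        calc g t ≤ ‖g t‖ := le_abs_self _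
        _ ≤ C := this
        _ ≤ C' := le_max_left _ _
      have hnn : 0 ≤ ‖c‖ * C' := mul_nonneg (norm_nonneg _) hC'pos.le
      rw [pi_norm_le_iff_of_nonneg hnn]
      intro j
      have h1 : ‖(c ᵥ* (A t)⁻¹) j‖ ≤ ∑ i : Fin m, ‖c i‖ * |(A t)⁻¹ i j| := by
        rw [Matrix.vecMul]
        refine le_trans (norm_sum_le _ _) ?_
        apply Finset.sum_le_sum
        intro i _
        simp [dotProduct, abs_mul, Real.norm_eq_abs]
      refine le_trans h1 ?_
      have h2 : ∑ i : Fin m, ‖c i‖ * |(A t)⁻¹ i j| ≤ ∑ i : Fin m, ‖c‖ * |(A t)⁻¹ i j| := by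
        apply Finset.sum_le_sum
        intro i _
        exact mul_le_mul_of_nonneg_right (norm_le_pi_norm c i) (abs_nonneg _)
      refine le_trans h2 ?_
      rw [← Finset.mul_sum]
      apply mul_le_mul_of_nonneg_left _ (norm_nonneg _)
      calc ∑ i : Fin m, |(A t)⁻¹ i j| ≤ g t :=
            Finset.single_le_sum (f := fun j' => ∑ i : Fin m, |(A t)⁻¹ i j'|)
              (fun j' _ => Finset.sum_nonneg fun i _ => abs_nonneg _) (Finset.mem_univ j)
        _ ≤ C' := hgt
    calc ‖c ᵥ* (A t)⁻¹‖ ≤ ‖c‖ * C' := hbound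
      _ < (ε / C') * C' := by
          apply mul_lt_mul_of_pos_right hcn hC'pos
      _ = ε := div_mul_cancel₀ ε hC'pos.ne'
end

section
/- Let F : [0,∞) → M_m(ℝ) be locally integrable with nonnegative off-diagonal entries, i.e., F(t) + m(t)·I has all entries ≥ 0 for some scalar function m. Let A solve A'(t) = F(t)·A(t), A(0) = I. Then for all 0 ≤ T ≤ t, the matrix A(t)·A(T)⁻¹ satisfies A(t)·A(T)⁻¹ ⪰ e^{-∫_T^t m(s)ds}·I in the ordering of the cone ℝ₊^m (i.e., (A(t)A(T)⁻¹ − e^{-∫_T^t m}·I)x ∈ ℝ₊^m for every x ∈ ℝ₊^m). -/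
open Matrix MeasureTheory intervalIntegral

lemma abs_exp_sub_exp_le {x y B : ℝ} (hx : x ≤ B) (hy : y ≤ B) :
    |Real.exp x - Real.exp y| ≤ Real.exp B * |x - y| := by
  wlog h : y ≤ x generalizing x y
  · rw [abs_sub_comm, abs_sub_comm x y]; exact this hy hx (le_of_not_ge h)
  have h1 : Real.exp x * (1 + (y - x)) ≤ Real.exp y := by
    rw [show Real.exp y = Real.exp x * Real.exp (y - x) by rw [← Real.exp_add]; ring_nf]
    have := Real.add_one_le_exp (y - x)
    nlinarith [Real.exp_nonneg x]
  have h2 : Real.exp x - Real.exp y ≤ Real.exp x * (x - y) := by nlinarith [Real.exp_nonneg x]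
  rw [abs_of_nonneg (by linarith [Real.exp_le_exp.2 h] : (0:ℝ) ≤ Real.exp x - Real.exp y),
    abs_of_nonneg (by linarith : (0:ℝ) ≤ x - y)]
  calc Real.exp x - Real.exp y ≤ Real.exp x * (x - y) := h2
    _ ≤ Real.exp B * (x - y) := by
        exact mul_le_mul_of_nonneg_right (Real.exp_le_exp.2 hx) (by linarith)

-- continuous case of the exp integral equation

lemma exp_primitive_continuous {g : ℝ → ℝ} (hg : Continuous g) (a r : ℝ) :
    Real.exp (∫ u in a..r, g u) = 1 + ∫ u in a..r, g u * Real.exp (∫ s in a..u, g s) := by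
  have hP : ∀ u : ℝ, HasDerivAt (fun v => ∫ s in a..v, g s) (g u) u := fun u =>
    intervalIntegral.integral_hasDerivAt_right (hg.intervalIntegrable a u)
      (hg.stronglyMeasurableAtFilter _ _) hg.continuousAt
  have hD : ∀ u ∈ Set.uIcc a r, HasDerivAt (fun v => Real.exp (∫ s in a..v, g s))
      (g u * Real.exp (∫ s in a..u, g s)) u := by
    intro u _
    simpa [mul_comm] using (hP u).exp
  have hint : IntervalIntegrable (fun u => g u * Real.exp (∫ s in a..u, g s)) volume a r := by
    apply Continuous.intervalIntegrable
    exact hg.mul ((intervalIntegral.continuous_primitive (fun c d => hg.intervalIntegrable c d) a).rexp)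
  have := intervalIntegral.integral_eq_sub_of_hasDerivAt hD hint
  rw [this]
  simp [intervalIntegral.integral_same]

lemma exp_primitive_integrable {f : ℝ → ℝ} (hf : Integrable f volume) {a r : ℝ} (har : a ≤ r) :
    Real.exp (∫ u in a..r, f u) = 1 + ∫ u in a..r, f u * Real.exp (∫ s in a..u, f s) := by
  set M : ℝ := ∫ x, |f x| with hMdef
  have hM0 : 0 ≤ M := integral_nonneg fun x => abs_nonneg _
  -- bound for set integrals of abs by total integral
  have habs : ∀ (φ : ℝ → ℝ), Integrable φ volume → ∀ u v : ℝ, u ≤ v →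
      (∫ s in u..v, |φ s|) ≤ ∫ x, |φ x| := by
    intro φ hφ u v huv
    rw [intervalIntegral.integral_of_le huv]
    exact setIntegral_le_integral hφ.abs (ae_of_all _ fun x => abs_nonneg _)
  have hone : ∀ (φ : ℝ → ℝ), Integrable φ volume → ∀ u v : ℝ, u ≤ v →
      |∫ s in u..v, φ s| ≤ ∫ x, |φ x| := by
    intro φ hφ u v huv
    exact (intervalIntegral.abs_integral_le_integral_abs huv).trans (habs φ hφ u v huv)
  set Pf : ℝ → ℝ := fun u => ∫ s in a..u, f s with hPfdef
  have hPfc : Continuous Pf :=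
    intervalIntegral.continuous_primitive (fun c d => hf.intervalIntegrable) a
  have hPf_le : ∀ u, a ≤ u → Pf u ≤ M := fun u hu =>
    (le_abs_self _).trans (hone f hf a u hu)
  set D : ℝ := Real.exp (Pf r) - (1 + ∫ u in a..r, f u * Real.exp (Pf u)) with hDdef
  suffices H : ∀ ε : ℝ, 0 < ε → |D| ≤ ε by
    have : |D| ≤ 0 := by
      by_contra hc
      push_neg at hc
      linarith [H (|D| / 2) (by linarith)]
    have : D = 0 := abs_nonpos_iff.mp this
    rw [hDdef] at this; linarith
  intro ε hε
  set C : ℝ := Real.exp (M + 1) * (M + 2) + Real.exp M with hCdef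
  have hC : 0 < C := by positivity
  set δ : ℝ := min 1 (ε / C) with hδdef
  have hδ0 : 0 < δ := lt_min one_pos (by positivity)
  have hδ1 : δ ≤ 1 := min_le_left _ _
  have hCδ : C * δ ≤ ε := by
    rw [hδdef]
    calc C * min 1 (ε / C) ≤ C * (ε / C) :=
          mul_le_mul_of_nonneg_left (min_le_right _ _) hC.le
      _ = ε := by field_simp
  obtain ⟨g, -, hfg, hgc, hgi⟩ := hf.exists_hasCompactSupport_integral_sub_le hδ0
  have hfg' : (∫ x, |f x - g x|) ≤ δ := by simpa [Real.norm_eq_abs] using hfg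
  set Pg : ℝ → ℝ := fun u => ∫ s in a..u, g s with hPgdef
  have hPgc : Continuous Pg :=
    intervalIntegral.continuous_primitive (fun c d => hgc.intervalIntegrable c d) a
  have hPdiff : ∀ u, a ≤ u → |Pf u - Pg u| ≤ δ := by
    intro u hu
    have : Pf u - Pg u = ∫ s in a..u, (f s - g s) :=
      (intervalIntegral.integral_sub (hf.intervalIntegrable) (hgi.intervalIntegrable)).symm
    rw [this]
    exact (hone _ (hf.sub hgi) a u hu).trans hfg'
  have hPg_le : ∀ u, a ≤ u → Pg u ≤ M + 1 := by
    intro u hu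
    have h1 := hPdiff u hu
    have h2 := hPf_le u hu
    have := abs_le.mp h1
    linarith
  have hexpd : ∀ u, a ≤ u → |Real.exp (Pf u) - Real.exp (Pg u)| ≤ Real.exp (M + 1) * δ := by
    intro u hu
    calc |Real.exp (Pf u) - Real.exp (Pg u)|
        ≤ Real.exp (M + 1) * |Pf u - Pg u| :=
          abs_exp_sub_exp_le (by linarith [hPf_le u hu]) (hPg_le u hu)
      _ ≤ Real.exp (M + 1) * δ :=
          mul_le_mul_of_nonneg_left (hPdiff u hu) (Real.exp_nonneg _)
  have Ig : Real.exp (Pg r) = 1 + ∫ u in a..r, g u * Real.exp (Pg u) :=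
    exp_primitive_continuous hgc a r
  -- integrability facts on a..r
  have iFG : IntervalIntegrable (fun u => (f u - g u) * Real.exp (Pf u)) volume a r :=
    ((hf.sub hgi).intervalIntegrable).mul_continuousOn (hPfc.rexp.continuousOn)
  have iF : IntervalIntegrable (fun u => f u * Real.exp (Pf u)) volume a r :=
    (hf.intervalIntegrable).mul_continuousOn (hPfc.rexp.continuousOn)
  have iG : IntervalIntegrable (fun u => g u * Real.exp (Pg u)) volume a r :=
    (hgc.mul hPgc.rexp).intervalIntegrable a r
  have iGd : IntervalIntegrable (fun u => g u * (Real.exp (Pf u) - Real.exp (Pg u))) volume a r :=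
    (hgc.mul (hPfc.rexp.sub hPgc.rexp)).intervalIntegrable a r
  -- decomposition
  have hdec : (∫ u in a..r, f u * Real.exp (Pf u)) - (∫ u in a..r, g u * Real.exp (Pg u))
      = (∫ u in a..r, (f u - g u) * Real.exp (Pf u))
        + ∫ u in a..r, g u * (Real.exp (Pf u) - Real.exp (Pg u)) := by
    rw [← intervalIntegral.integral_add iFG iGd, ← intervalIntegral.integral_sub iF iG]
    apply intervalIntegral.integral_congr
    intro u _; ring
  -- bound b1
  have b1 : |∫ u in a..r, (f u - g u) * Real.exp (Pf u)| ≤ Real.exp M * δ := by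
    calc |∫ u in a..r, (f u - g u) * Real.exp (Pf u)|
        ≤ ∫ u in a..r, |(f u - g u) * Real.exp (Pf u)| :=
          intervalIntegral.abs_integral_le_integral_abs har
      _ ≤ ∫ u in a..r, |f u - g u| * Real.exp M := by
          apply intervalIntegral.integral_mono_on har iFG.abs
            (((hf.sub hgi).intervalIntegrable.abs).mul_const _)
          intro u hu
          rw [abs_mul, abs_of_nonneg (Real.exp_nonneg _)]
          exact mul_le_mul_of_nonneg_left (Real.exp_le_exp.2 (hPf_le u hu.1)) (abs_nonneg _)
      _ = (∫ u in a..r, |f u - g u|) * Real.exp M := intervalIntegral.integral_mul_const _ _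
      _ ≤ δ * Real.exp M := mul_le_mul_of_nonneg_right (habs _ (hf.sub hgi) a r har |>.trans hfg')
            (Real.exp_nonneg _)
      _ = Real.exp M * δ := mul_comm _ _
  -- bound on ∫ |g|
  have hg_int_bd : (∫ u in a..r, |g u|) ≤ M + 1 := by
    have : ∀ u ∈ Set.Icc a r, |g u| ≤ |f u| + |f u - g u| := by
      intro u _
      calc |g u| = |f u - (f u - g u)| := by ring_nf
        _ ≤ |f u| + |f u - g u| := abs_sub _ _
    calc (∫ u in a..r, |g u|) ≤ ∫ u in a..r, (|f u| + |f u - g u|) := by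
          apply intervalIntegral.integral_mono_on har (hgi.intervalIntegrable.abs)
            ((hf.intervalIntegrable.abs).add ((hf.sub hgi).intervalIntegrable.abs)) this
      _ = (∫ u in a..r, |f u|) + ∫ u in a..r, |f u - g u| :=
          intervalIntegral.integral_add (hf.intervalIntegrable.abs)
            ((hf.sub hgi).intervalIntegrable.abs)
      _ ≤ M + δ := add_le_add (habs f hf a r har) ((habs _ (hf.sub hgi) a r har).trans hfg')
      _ ≤ M + 1 := by linarith
  have b2 : |∫ u in a..r, g u * (Real.exp (Pf u) - Real.exp (Pg u))|
      ≤ (M + 1) * (Real.exp (M + 1) * δ) := by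
    calc |∫ u in a..r, g u * (Real.exp (Pf u) - Real.exp (Pg u))|
        ≤ ∫ u in a..r, |g u * (Real.exp (Pf u) - Real.exp (Pg u))| :=
          intervalIntegral.abs_integral_le_integral_abs har
      _ ≤ ∫ u in a..r, |g u| * (Real.exp (M + 1) * δ) := by
          apply intervalIntegral.integral_mono_on har iGd.abs
            ((hgi.intervalIntegrable.abs).mul_const _)
          intro u hu
          rw [abs_mul]
          exact mul_le_mul_of_nonneg_left (hexpd u hu.1) (abs_nonneg _)
      _ = (∫ u in a..r, |g u|) * (Real.exp (M + 1) * δ) := intervalIntegral.integral_mul_const _ _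
      _ ≤ (M + 1) * (Real.exp (M + 1) * δ) :=
          mul_le_mul_of_nonneg_right hg_int_bd (by positivity)
  have b3 : |Real.exp (Pf r) - Real.exp (Pg r)| ≤ Real.exp (M + 1) * δ := hexpd r har
  have hDeq : D = (Real.exp (Pf r) - Real.exp (Pg r))
      - ((∫ u in a..r, (f u - g u) * Real.exp (Pf u))
        + ∫ u in a..r, g u * (Real.exp (Pf u) - Real.exp (Pg u))) := by
    rw [hDdef, ← hdec, Ig]; ring
  calc |D| ≤ |Real.exp (Pf r) - Real.exp (Pg r)|
      + (|∫ u in a..r, (f u - g u) * Real.exp (Pf u)|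
        + |∫ u in a..r, g u * (Real.exp (Pf u) - Real.exp (Pg u))|) := by
        rw [hDeq]
        exact (abs_sub _ _).trans (by gcongr; exact abs_add_le _ _)
    _ ≤ Real.exp (M + 1) * δ + (Real.exp M * δ + (M + 1) * (Real.exp (M + 1) * δ)) := by
        gcongr
    _ ≤ C * δ := by rw [hCdef]; ring_nf; nlinarith [Real.exp_nonneg (M+1), hδ0.le]
    _ ≤ ε := hCδ

lemma exp_primitive {c : ℝ → ℝ} {a b : ℝ} (hab : a ≤ b)
    (hc : IntervalIntegrable c volume a b) {r : ℝ} (hr : r ∈ Set.Icc a b) :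
    Real.exp (∫ u in a..r, c u) = 1 + ∫ u in a..r, c u * Real.exp (∫ s in a..u, c s) := by
  set f : ℝ → ℝ := (Set.Ioc a b).indicator c with hfdef
  have hfi : Integrable f volume := by
    rw [hfdef]
    exact (IntegrableOn.integrable_indicator (hc.1) measurableSet_Ioc)
  have hcongr : ∀ u ∈ Set.Icc a b, (∫ s in a..u, f s) = ∫ s in a..u, c s := by
    intro u hu
    apply intervalIntegral.integral_congr_ae
    filter_upwards with x hx
    rw [Set.uIoc_of_le hu.1] at hx
    rw [hfdef]
    exact Set.indicator_of_mem (Set.mem_of_mem_of_subset hx (Set.Ioc_subset_Ioc_right hu.2)) c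
  have h2 : (∫ u in a..r, f u * Real.exp (∫ s in a..u, f s))
      = ∫ u in a..r, c u * Real.exp (∫ s in a..u, c s) := by
    apply intervalIntegral.integral_congr_ae
    filter_upwards with x hx
    rw [Set.uIoc_of_le hr.1] at hx
    have hxab : x ∈ Set.Ioc a b := Set.mem_of_mem_of_subset hx (Set.Ioc_subset_Ioc_right hr.2)
    rw [hcongr x ⟨hxab.1.le, hxab.2⟩, hfdef]
    rw [Set.indicator_of_mem hxab c]
  rw [← hcongr r hr, ← h2]
  exact exp_primitive_integrable hfi hr.1

lemma core_nonneg {m : ℕ} {T t : ℝ} (hTt : T ≤ t)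
    (G : ℝ → Matrix (Fin m) (Fin m) ℝ)
    (hGint : ∀ i j, IntervalIntegrable (fun u => G u i j) volume T t)
    (hGoff : ∀ u ∈ Set.Icc T t, ∀ i j, i ≠ j → 0 ≤ G u i j)
    (w : ℝ → Fin m → ℝ)
    (hwcont : ∀ i, ContinuousOn (fun r => w r i) (Set.Icc T t))
    (ψ : ℝ → Fin m → ℝ)
    (hψint : ∀ i, IntervalIntegrable (fun u => ψ u i) volume T t)
    (hψ_lb : ∀ u ∈ Set.Icc T t, ∀ i, (G u *ᵥ w u) i ≤ ψ u i)
    (heq : ∀ r ∈ Set.Icc T t, ∀ i, w r i = ∫ u in T..r, ψ u i) :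
    ∀ r ∈ Set.Icc T t, ∀ i, 0 ≤ w r i := by
  have hwT : ∀ i, w T i = 0 := by
    intro i
    rw [heq T ⟨le_refl T, hTt⟩ i, intervalIntegral.integral_same]
  -- the comparison weight
  set c : ℝ → ℝ := fun u => ∑ i : Fin m, ∑ j : Fin m, |G u i j| with hcdef
  have hc0 : ∀ u, 0 ≤ c u := fun u =>
    Finset.sum_nonneg fun i _ => Finset.sum_nonneg fun j _ => abs_nonneg _
  have hrow : ∀ u (i : Fin m), (∑ j : Fin m, |G u i j|) ≤ c u := by
    intro u i
    exact Finset.single_le_sum (f := fun i => ∑ j : Fin m, |G u i j|)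
      (fun k _ => Finset.sum_nonneg fun j _ => abs_nonneg _) (Finset.mem_univ i)
  have hcint : IntervalIntegrable c volume T t := by
    have hc' : c = ∑ i : Fin m, ∑ j : Fin m, (fun u => |G u i j|) := by
      funext u
      rw [hcdef]
      simp [Finset.sum_apply]
    rw [hc']
    exact IntervalIntegrable.sum Finset.univ fun i _ =>
      IntervalIntegrable.sum Finset.univ fun j _ => (hGint i j).abs
  set E : ℝ → ℝ := fun r => Real.exp (∫ u in T..r, c u) with hEdef
  have hEpos : ∀ r, 0 < E r := fun r => Real.exp_pos _
  have hE_cont : ContinuousOn E (Set.Icc T t) := by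
    rw [hEdef]
    apply Real.continuous_exp.comp_continuousOn
    have := intervalIntegral.continuousOn_primitive_interval' hcint
      (by rw [Set.uIcc_of_le hTt]; exact Set.left_mem_Icc.2 hTt)
    rwa [Set.uIcc_of_le hTt] at this
  have hEeq : ∀ r ∈ Set.Icc T t, E r = 1 + ∫ u in T..r, c u * E u :=
    fun r hr => exp_primitive hTt hcint hr
  have hcE_int : IntervalIntegrable (fun u => c u * E u) volume T t := by
    apply hcint.mul_continuousOn
    rwa [Set.uIcc_of_le hTt]
  -- it suffices to prove the ε-perturbed statement
  suffices Hε : ∀ ε : ℝ, 0 < ε → ∀ r ∈ Set.Icc T t, ∀ i, -(ε * E r) ≤ w r i by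
    intro r hr i
    by_contra hneg
    push_neg at hneg
    have hEr := hEpos r
    have hε : 0 < -w r i / (2 * E r) := div_pos (by linarith) (by positivity)
    have h1 := Hε _ hε r hr i
    have h2 : -w r i / (2 * E r) * E r = -w r i / 2 := by field_simp
    rw [h2] at h1
    linarith
  intro ε hε
  by_contra hK
  push_neg at hK
  obtain ⟨r₀, hr₀, i₀, hi₀⟩ := hK
  -- the bad set K
  set K : Set ℝ := ⋃ i : Fin m, {r ∈ Set.Icc T t | w r i + ε * E r ≤ 0} with hKdef
  have hKclosed : IsClosed K := by
    apply isClosed_iUnion_of_finite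
    intro i
    have : {r ∈ Set.Icc T t | w r i + ε * E r ≤ 0}
        = Set.Icc T t ∩ (fun r => w r i + ε * E r) ⁻¹' Set.Iic 0 := by
      ext r
      simp only [Set.mem_setOf_eq, Set.mem_inter_iff, Set.mem_preimage, Set.mem_Iic]
    rw [this]
    exact ContinuousOn.preimage_isClosed_of_isClosed
      ((hwcont i).add (continuousOn_const.mul hE_cont)) isClosed_Icc isClosed_Iic
  have hKne : K.Nonempty := ⟨r₀, Set.mem_iUnion.2 ⟨i₀, hr₀, by linarith⟩⟩
  have hKsub : K ⊆ Set.Icc T t := by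
    intro r hr
    obtain ⟨i, hi, -⟩ := Set.mem_iUnion.1 hr
    exact hi
  have hKbdd : BddBelow K := BddBelow.mono hKsub bddBelow_Icc
  set τ : ℝ := sInf K with hτdef
  have hτK : τ ∈ K := hKclosed.csInf_mem hKne hKbdd
  obtain ⟨i, hmem⟩ := Set.mem_iUnion.1 hτK
  obtain ⟨hτm, hτi⟩ := hmem
  have hTτ : T < τ := by
    rcases eq_or_lt_of_le hτm.1 with h | h
    · exfalso
      have h0 : w τ i = 0 := by rw [← h]; exact hwT i
      nlinarith [hEpos τ]
    · exact h
  have hnotK : ∀ s, T ≤ s → s < τ → ∀ j, -(ε * E s) < w s j := by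
    intro s hs hsτ j
    by_contra hle
    push_neg at hle
    have hsK : s ∈ K := Set.mem_iUnion.2 ⟨j, ⟨⟨hs, hsτ.le.trans hτm.2⟩, by linarith⟩⟩
    exact absurd (csInf_le hKbdd hsK) (not_le.2 hsτ)
  have hlb : ∀ u ∈ Set.Icc T τ, ∀ j, -(ε * E u) ≤ w u j := by
    intro u hu j
    rcases eq_or_lt_of_le hu.2 with h | h
    · rw [h]
      have hφ : ContinuousOn (fun s => w s j + ε * E s) (Set.Icc T t) :=
        (hwcont j).add (continuousOn_const.mul hE_cont)
      have hsubset : Set.Ico T τ ⊆ Set.Icc T t := fun s hs => ⟨hs.1, hs.2.le.trans hτm.2⟩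
      have hnb : (nhdsWithin τ (Set.Ico T τ)).NeBot := by
        apply mem_closure_iff_nhdsWithin_neBot.mp
        rw [closure_Ico (ne_of_lt hTτ)]
        exact ⟨hTτ.le, le_refl τ⟩
      have htend : Filter.Tendsto (fun s => w s j + ε * E s) (nhdsWithin τ (Set.Ico T τ))
          (nhds (w τ j + ε * E τ)) := ((hφ τ hτm).mono hsubset).tendsto
      have hev : ∀ᶠ s in nhdsWithin τ (Set.Ico T τ), 0 ≤ w s j + ε * E s := by
        filter_upwards [self_mem_nhdsWithin] with s hs
        linarith [hnotK s hs.1 hs.2 j]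
      linarith [ge_of_tendsto htend hev]
    · linarith [hnotK u hu.1 h j]
  have hwτi : w τ i ≤ -(ε * E τ) := by linarith
  have hwτneg : w τ i < 0 := lt_of_le_of_lt hwτi (by nlinarith [hEpos τ])
  set S : Set ℝ := {s | s ∈ Set.Icc T τ ∧ 0 ≤ w s i} with hSdef
  have hScl : IsClosed S := by
    have hSalt : S = Set.Icc T τ ∩ (fun s => w s i) ⁻¹' Set.Ici 0 := by
      ext s
      simp only [hSdef, Set.mem_setOf_eq, Set.mem_inter_iff, Set.mem_preimage, Set.mem_Ici]
    rw [hSalt]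
    exact ContinuousOn.preimage_isClosed_of_isClosed
      ((hwcont i).mono (Set.Icc_subset_Icc_right hτm.2)) isClosed_Icc isClosed_Ici
  have hSne : S.Nonempty := ⟨T, ⟨⟨le_refl T, hTτ.le⟩, by rw [hwT i]⟩⟩
  have hSbdd : BddAbove S := BddAbove.mono (fun s hs => hs.1) bddAbove_Icc
  set σ : ℝ := sSup S with hσdef
  have hσS : σ ∈ S := hScl.csSup_mem hSne hSbdd
  have hσm : σ ∈ Set.Icc T τ := hσS.1
  have hwσ0 : 0 ≤ w σ i := hσS.2
  have hστ : σ < τ := by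
    rcases eq_or_lt_of_le hσm.2 with h | h
    · exfalso; rw [h] at hwσ0; linarith
    · exact h
  have hσt : σ ∈ Set.Icc T t := ⟨hσm.1, hσm.2.trans hτm.2⟩
  have hneg' : ∀ s, σ < s → s ≤ τ → w s i < 0 := by
    intro s hσs hsτ
    by_contra hge
    push_neg at hge
    have hsS : s ∈ S := ⟨⟨hσm.1.trans hσs.le, hsτ⟩, hge⟩
    exact absurd (le_csSup hSbdd hsS) (not_le.2 hσs)
  have hwσle : w σ i ≤ 0 := by
    have hsubset : Set.Ioc σ τ ⊆ Set.Icc T t := fun s hs =>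
      ⟨hσm.1.trans hs.1.le, hs.2.trans hτm.2⟩
    have hnb : (nhdsWithin σ (Set.Ioc σ τ)).NeBot := by
      apply mem_closure_iff_nhdsWithin_neBot.mp
      rw [closure_Ioc (ne_of_lt hστ)]
      exact ⟨le_refl σ, hστ.le⟩
    have htend := ((hwcont i σ hσt).mono hsubset).tendsto
    have hev : ∀ᶠ s in nhdsWithin σ (Set.Ioc σ τ), w s i ≤ 0 := by
      filter_upwards [self_mem_nhdsWithin] with s hs
      exact (hneg' s hs.1 hs.2).le
    exact le_of_tendsto htend hev
  have hwσ : w σ i = 0 := le_antisymm hwσle hwσ0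
  -- subinterval inclusions
  have hsubστ : Set.uIcc σ τ ⊆ Set.uIcc T t :=
    Set.uIcc_subset_uIcc (by rw [Set.uIcc_of_le hTt]; exact hσt)
      (by rw [Set.uIcc_of_le hTt]; exact hτm)
  have hsubTτ : Set.uIcc T τ ⊆ Set.uIcc T t :=
    Set.uIcc_subset_uIcc Set.left_mem_uIcc (by rw [Set.uIcc_of_le hTt]; exact hτm)
  have hsubTσ : Set.uIcc T σ ⊆ Set.uIcc T t :=
    Set.uIcc_subset_uIcc Set.left_mem_uIcc (by rw [Set.uIcc_of_le hTt]; exact hσt)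
  have iψτ := (hψint i).mono_set hsubTτ
  have iψσ := (hψint i).mono_set hsubTσ
  have hdiff : w τ i - w σ i = ∫ u in σ..τ, ψ u i := by
    rw [heq τ hτm i, heq σ hσt i]
    exact (intervalIntegral.integral_interval_sub_left iψτ iψσ)
  -- pointwise bound on [σ, τ]
  have hpt : ∀ u ∈ Set.Icc σ τ, -(ε * (c u * E u)) ≤ ψ u i := by
    intro u hu
    have huT : u ∈ Set.Icc T τ := ⟨hσm.1.trans hu.1, hu.2⟩
    have hut : u ∈ Set.Icc T t := ⟨huT.1, huT.2.trans hτm.2⟩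
    have hεE : 0 ≤ ε * E u := mul_nonneg hε.le (hEpos u).le
    have hterm : ∀ j, -(|G u i j| * (ε * E u)) ≤ G u i j * w u j := by
      intro j
      by_cases hij : j = i
      · subst hij
        have h1 : -(ε * E u) ≤ w u j := hlb u huT j
        have h2 : w u j ≤ 0 := by
          rcases eq_or_lt_of_le hu.1 with h | h
          · rw [← h]; exact hwσ.le
          · exact (hneg' u h hu.2).le
        have habs : |w u j| ≤ ε * E u := abs_le.2 ⟨h1, h2.trans hεE⟩
        calc -(|G u j j| * (ε * E u)) ≤ -|G u j j * w u j| := by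
              apply neg_le_neg
              rw [abs_mul]
              exact mul_le_mul_of_nonneg_left habs (abs_nonneg _)
          _ ≤ G u j j * w u j := neg_abs_le _
      · have hG0 : 0 ≤ G u i j := hGoff u hut i j (Ne.symm hij)
        have h1 : -(ε * E u) ≤ w u j := hlb u huT j
        calc -(|G u i j| * (ε * E u)) = |G u i j| * (-(ε * E u)) := by ring
          _ ≤ G u i j * w u j := by
              rw [abs_of_nonneg hG0]
              exact mul_le_mul_of_nonneg_left h1 hG0
    have hGw : (G u *ᵥ w u) i = ∑ j : Fin m, G u i j * w u j := by
      simp [Matrix.mulVec, dotProduct]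
    have step1 : -(ε * (c u * E u)) ≤ -((∑ j : Fin m, |G u i j|) * (ε * E u)) := by
      apply neg_le_neg
      calc (∑ j : Fin m, |G u i j|) * (ε * E u) ≤ c u * (ε * E u) :=
            mul_le_mul_of_nonneg_right (hrow u i) hεE
        _ = ε * (c u * E u) := by ring
    have step2 : -((∑ j : Fin m, |G u i j|) * (ε * E u)) ≤ ∑ j : Fin m, G u i j * w u j := by
      have hrw : -((∑ j : Fin m, |G u i j|) * (ε * E u))
          = ∑ j : Fin m, -(|G u i j| * (ε * E u)) := by
        rw [Finset.sum_mul, ← Finset.sum_neg_distrib]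
      rw [hrw]
      exact Finset.sum_le_sum fun j _ => hterm j
    have := hψ_lb u hut i
    rw [hGw] at this
    linarith
  -- integrate the bound
  have icE_στ : IntervalIntegrable (fun u => c u * E u) volume σ τ := hcE_int.mono_set hsubστ
  have iψ_στ : IntervalIntegrable (fun u => ψ u i) volume σ τ := (hψint i).mono_set hsubστ
  have hmono : (∫ u in σ..τ, -(ε * (c u * E u))) ≤ ∫ u in σ..τ, ψ u i :=
    intervalIntegral.integral_mono_on hστ.le ((icE_στ.const_mul ε).neg) iψ_στ hpt
  have hconst : (∫ u in σ..τ, -(ε * (c u * E u))) = -(ε * ∫ u in σ..τ, c u * E u) := by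
    rw [intervalIntegral.integral_neg, intervalIntegral.integral_const_mul]
  have hσint : 0 ≤ ∫ u in T..σ, c u * E u :=
    intervalIntegral.integral_nonneg hσm.1 fun u _ => mul_nonneg (hc0 u) (hEpos u).le
  have hadd : (∫ u in T..σ, c u * E u) + (∫ u in σ..τ, c u * E u) = ∫ u in T..τ, c u * E u :=
    intervalIntegral.integral_add_adjacent_intervals (hcE_int.mono_set hsubTσ) icE_στ
  have hEτ : (∫ u in T..τ, c u * E u) = E τ - 1 := by linarith [hEeq τ hτm]
  have hle1 : (∫ u in σ..τ, c u * E u) ≤ E τ - 1 := by linarith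
  have hle2 : -(ε * ∫ u in σ..τ, c u * E u) ≥ -(ε * (E τ - 1)) := by nlinarith
  have : w τ i ≥ -(ε * E τ) + ε := by
    rw [hconst] at hmono
    nlinarith [hdiff]
  linarith

/-- Comparison step of Proposition 5 (mon10): for a Metzler-type system
(F(t) + m(t)·I entrywise nonnegative) with fundamental matrix A, the transition
matrix dominates e^{-∫_T^t m}·I in the ordering of the cone ℝ₊^m. -/
theorem stmt4 {m : ℕ}
    (F : ℝ → Matrix (Fin m) (Fin m) ℝ) (μ : ℝ → ℝ)
    (A : ℝ → Matrix (Fin m) (Fin m) ℝ)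
    (hμint : ∀ T, IntervalIntegrable μ volume 0 T)
    (hFint : ∀ T i j, IntervalIntegrable (fun t => F t i j) volume 0 T)
    (hMetzler : ∀ t, 0 ≤ t → ∀ i j, 0 ≤ (F t + μ t • (1 : Matrix (Fin m) (Fin m) ℝ)) i j)
    (hA : ∀ t, 0 ≤ t → ∀ i j, HasDerivAt (fun s => A s i j) ((F t * A t) i j) t)
    (hA0 : A 0 = 1)
    (hAinv : ∀ t, IsUnit (A t)) :
    ∀ T t, 0 ≤ T → T ≤ t → ∀ x : Fin m → ℝ, (∀ i, 0 ≤ x i) →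
      ∀ i, 0 ≤ ((A t * (A T)⁻¹) *ᵥ x - Real.exp (-(∫ s in T..t, μ s)) • x) i := by
  intro T t hT hTt x hx i
  have hF' : ∀ (a b : ℝ) (i j : Fin m), IntervalIntegrable (fun u => F u i j) volume a b :=
    fun a b i j => ((hFint a i j).symm).trans (hFint b i j)
  have hμ' : ∀ a b : ℝ, IntervalIntegrable μ volume a b :=
    fun a b => ((hμint a).symm).trans (hμint b)
  have hμneg : ∀ a b : ℝ, IntervalIntegrable (fun s => -μ s) volume a b :=
    fun a b => (hμ' a b).neg
  set y : Fin m → ℝ := (A T)⁻¹ *ᵥ x with hydef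
  set v : ℝ → Fin m → ℝ := fun r => A r *ᵥ y with hvdef
  have hAT : A T * (A T)⁻¹ = 1 :=
    Matrix.mul_nonsing_inv _ ((Matrix.isUnit_iff_isUnit_det _).mp (hAinv T))
  have hvmul : ∀ r, (A r * (A T)⁻¹) *ᵥ x = v r := by
    intro r
    show _ = A r *ᵥ ((A T)⁻¹ *ᵥ x)
    rw [Matrix.mulVec_mulVec]
  have hvT : v T = x := by
    rw [← hvmul T, hAT, Matrix.one_mulVec]
  set h : ℝ → ℝ := fun r => Real.exp (∫ s in T..r, -μ s) with hhdef
  have hhc : Continuous h :=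
    Real.continuous_exp.comp (intervalIntegral.continuous_primitive (fun a b => hμneg a b) T)
  have hh0 : ∀ r, 0 ≤ h r := fun r => (Real.exp_pos _).le
  set w : ℝ → Fin m → ℝ := fun r j => v r j - h r * x j with hwdef
  -- derivative of v
  have hvD : ∀ (j : Fin m) (u : ℝ), 0 ≤ u → HasDerivAt (fun s => v s j) ((F u *ᵥ v u) j) u := by
    intro j u hu
    have hrw : (fun s => v s j) = fun s => ∑ k : Fin m, A s j k * y k := by
      funext s; simp [hvdef, Matrix.mulVec, dotProduct]
    rw [hrw]
    have hD := HasDerivAt.fun_sum (fun k (_ : k ∈ Finset.univ) => (hA u hu j k).mul_const (y k))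
    refine hD.congr_deriv ?_
    rw [hvdef, Matrix.mulVec_mulVec]
    simp [Matrix.mulVec, dotProduct]
  have hvc : ∀ j, ContinuousOn (fun s => v s j) (Set.Icc T t) := fun j s hs =>
    ((hvD j s (hT.trans hs.1)).continuousAt).continuousWithinAt
  have hwc : ∀ j, ContinuousOn (fun r => w r j) (Set.Icc T t) := by
    intro j
    exact (hvc j).sub ((hhc.continuousOn).mul continuousOn_const)
  -- generic integrability of (F *ᵥ z) rows
  have hFz_int : ∀ (z : ℝ → Fin m → ℝ), (∀ k, ContinuousOn (fun s => z s k) (Set.Icc T t)) →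
      ∀ r ∈ Set.Icc T t, ∀ j, IntervalIntegrable (fun u => (F u *ᵥ z u) j) volume T r := by
    intro z hz r hr j
    have hrw : (fun u => (F u *ᵥ z u) j) = ∑ k : Fin m, (fun u => F u j k * z u k) := by
      funext u; simp [Matrix.mulVec, dotProduct, Finset.sum_apply]
    rw [hrw]
    apply IntervalIntegrable.sum
    intro k _
    apply (hF' T r j k).mul_continuousOn
    apply (hz k).mono
    rw [Set.uIcc_of_le hr.1]
    exact Set.Icc_subset_Icc_right hr.2
  -- integral equation for v
  have hveq : ∀ r ∈ Set.Icc T t, ∀ j, v r j = x j + ∫ u in T..r, (F u *ᵥ v u) j := by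
    intro r hr j
    have hint := hFz_int v hvc r hr j
    have hD : ∀ u ∈ Set.uIcc T r, HasDerivAt (fun s => v s j) ((F u *ᵥ v u) j) u := by
      intro u hu
      rw [Set.uIcc_of_le hr.1] at hu
      exact hvD j u (hT.trans hu.1)
    have := intervalIntegral.integral_eq_sub_of_hasDerivAt hD hint
    rw [this, hvT]
    ring
  -- integral equation for h
  have hheq : ∀ r ∈ Set.Icc T t, h r = 1 + ∫ u in T..r, -μ u * h u := by
    intro r hr
    rw [hhdef]
    exact exp_primitive hTt (hμneg T t) hr
  -- the combined integrand
  set ψ : ℝ → Fin m → ℝ :=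
    fun u j => h u * ((F u + μ u • (1 : Matrix (Fin m) (Fin m) ℝ)) *ᵥ x) j + (F u *ᵥ w u) j
    with hψdef
  have hptwise : ∀ (u : ℝ) (j : Fin m),
      (F u *ᵥ v u) j + μ u * h u * x j = ψ u j := by
    intro u j
    have hv_eq : v u = w u + h u • x := by
      funext k
      show v u k = (v u k - h u * x k) + h u * x k
      ring
    show (F u *ᵥ v u) j + μ u * h u * x j
        = h u * ((F u + μ u • (1 : Matrix (Fin m) (Fin m) ℝ)) *ᵥ x) j + (F u *ᵥ w u) j
    rw [hv_eq, Matrix.mulVec_add, Matrix.mulVec_smul, Matrix.add_mulVec,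
      Matrix.smul_mulVec, Matrix.one_mulVec]
    simp only [Pi.add_apply, Pi.smul_apply, smul_eq_mul]
    ring
  -- integral equation for w
  have hweq : ∀ r ∈ Set.Icc T t, ∀ j, w r j = ∫ u in T..r, ψ u j := by
    intro r hr j
    have hint1 := hFz_int v hvc r hr j
    have hint2 : IntervalIntegrable (fun u => μ u * h u * x j) volume T r :=
      ((hμ' T r).mul_continuousOn hhc.continuousOn).mul_const _
    have e1 : w r j = (x j + ∫ u in T..r, (F u *ᵥ v u) j)
        - (1 + ∫ u in T..r, -μ u * h u) * x j := by
      show v r j - h r * x j = _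
      rw [hveq r hr j, hheq r hr]
    have e2 : (∫ u in T..r, μ u * h u * x j) = -((∫ u in T..r, -μ u * h u) * x j) := by
      rw [← intervalIntegral.integral_mul_const, ← intervalIntegral.integral_neg]
      congr 1; funext u; ring
    have e3 : w r j = (∫ u in T..r, (F u *ᵥ v u) j) + ∫ u in T..r, μ u * h u * x j := by
      rw [e1, e2]; ring
    rw [e3, ← intervalIntegral.integral_add hint1 hint2]
    apply intervalIntegral.integral_congr
    intro u _
    exact hptwise u j
  -- apply the core lemma
  have hψint : ∀ j, IntervalIntegrable (fun u => ψ u j) volume T t := by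
    intro j
    have hint3 : IntervalIntegrable
        (fun u => ((F u + μ u • (1 : Matrix (Fin m) (Fin m) ℝ)) *ᵥ x) j) volume T t := by
      have hrw : (fun u => ((F u + μ u • (1 : Matrix (Fin m) (Fin m) ℝ)) *ᵥ x) j)
          = fun u => (∑ k : Fin m, F u j k * x k) + μ u * x j := by
        funext u
        rw [Matrix.add_mulVec, Matrix.smul_mulVec, Matrix.one_mulVec]
        simp [Matrix.mulVec, dotProduct]
      rw [hrw]
      apply IntervalIntegrable.add
      · have : (fun u => ∑ k : Fin m, F u j k * x k) = ∑ k : Fin m, (fun u => F u j k * x k) := by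
          funext u; simp [Finset.sum_apply]
        rw [this]
        exact IntervalIntegrable.sum Finset.univ fun k _ => (hF' T t j k).mul_const _
      · exact (hμ' T t).mul_const (x j)
    have hwt : t ∈ Set.Icc T t := ⟨hTt, le_refl t⟩
    show IntervalIntegrable (fun u => h u * ((F u + μ u • (1 : Matrix (Fin m) (Fin m) ℝ)) *ᵥ x) j
      + (F u *ᵥ w u) j) volume T t
    exact (hint3.continuousOn_mul hhc.continuousOn).add (hFz_int w hwc t hwt j)
  have hψ_lb : ∀ u ∈ Set.Icc T t, ∀ j, (F u *ᵥ w u) j ≤ ψ u j := by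
    intro u hu j
    show (F u *ᵥ w u) j
        ≤ h u * ((F u + μ u • (1 : Matrix (Fin m) (Fin m) ℝ)) *ᵥ x) j + (F u *ᵥ w u) j
    have h1 : 0 ≤ ((F u + μ u • (1 : Matrix (Fin m) (Fin m) ℝ)) *ᵥ x) j := by
      have hrw : ((F u + μ u • (1 : Matrix (Fin m) (Fin m) ℝ)) *ᵥ x) j
          = ∑ k : Fin m, (F u + μ u • (1 : Matrix (Fin m) (Fin m) ℝ)) j k * x k := by
        simp [Matrix.mulVec, dotProduct]
      rw [hrw]
      exact Finset.sum_nonneg fun k _ => mul_nonneg (hMetzler u (hT.trans hu.1) j k) (hx k)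
    nlinarith [hh0 u]
  have hGoff : ∀ u ∈ Set.Icc T t, ∀ i j : Fin m, i ≠ j → 0 ≤ F u i j := by
    intro u hu i' j hij
    have hM := hMetzler u (hT.trans hu.1) i' j
    rwa [Matrix.add_apply, Matrix.smul_apply, Matrix.one_apply_ne hij, smul_eq_mul,
      mul_zero, add_zero] at hM
  have hcore := core_nonneg hTt F (fun i' j => hF' T t i' j) hGoff w hwc ψ hψint hψ_lb hweq
  have hfin := hcore t ⟨hTt, le_refl t⟩ i
  have hexp : Real.exp (-(∫ s in T..t, μ s)) = h t := by
    show _ = Real.exp (∫ s in T..t, -μ s)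
    rw [intervalIntegral.integral_neg]
  have hgoal : ((A t * (A T)⁻¹) *ᵥ x - Real.exp (-(∫ s in T..t, μ s)) • x) i = w t i := by
    rw [Pi.sub_apply, Pi.smul_apply, smul_eq_mul, hvmul t, hexp]
  rw [hgoal]
  exact hfin
end

section
/- Comparison of fundamental matrices under entrywise domination: let F, F♯ : [0,∞) → M_m(ℝ) be locally integrable with F♯(t) entrywise nonnegative and F♯(t) ⪰ F(t) ⪰ −F♯(t) entrywise for a.e. t. Let A solve A' = F·A, A(0) = I, and B solve B' = F♯·B, B(0) = I. Then B(t) ⪰ A(t) ⪰ −B(t) entrywise for all t ≥ 0; in particular B(t) ⪰ A(t)^♯ entrywise. -/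
open Matrix MeasureTheory

/-- Grönwall-type auxiliary lemma: a nonnegative continuous function on `[0, ∞)`
vanishing at `0` and satisfying the integral inequality restart property is
identically zero. -/
lemma gron_aux {f g : ℝ → ℝ} (hf : ContinuousOn f (Set.Ici 0))
    (hf0 : f 0 = 0) (hfnn : ∀ t, 0 ≤ t → 0 ≤ f t)
    (hgint : ∀ a b : ℝ, IntervalIntegrable g volume a b)
    (hgnn : ∀ t, 0 ≤ t → 0 ≤ g t)
    (hstep : ∀ a t, 0 ≤ a → a ≤ t → f a = 0 → f t ≤ ∫ s in a..t, g s * f s) :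
    ∀ t, 0 ≤ t → f t = 0 := by
  intro T hT
  set S : Set ℝ := {t | t ∈ Set.Icc (0:ℝ) T ∧ ∀ s ∈ Set.Icc (0:ℝ) t, f s = 0} with hS
  have h0S : (0:ℝ) ∈ S := ⟨⟨le_rfl, hT⟩, fun s hs => by
    have : s = 0 := le_antisymm hs.2 hs.1
    simpa [this] using hf0⟩
  have hbdd : BddAbove S := ⟨T, fun x hx => hx.1.2⟩
  set b := sSup S with hb
  have hb0 : 0 ≤ b := le_csSup hbdd h0S
  have hbT : b ≤ T := csSup_le ⟨0, h0S⟩ fun x hx => hx.1.2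
  -- subset of Ici 0 for uIcc
  have huIcc : ∀ a c : ℝ, 0 ≤ a → 0 ≤ c → Set.uIcc a c ⊆ Set.Ici 0 := by
    intro a c ha hc x hx
    exact le_trans (le_min ha hc) hx.1
  have hgfint : ∀ a c : ℝ, 0 ≤ a → 0 ≤ c →
      IntervalIntegrable (fun s => g s * f s) volume a c := by
    intro a c ha hc
    exact (hgint a c).mul_continuousOn (hf.mono (huIcc a c ha hc))
  have hzero_lt : ∀ s, 0 ≤ s → s < b → f s = 0 := by
    intro s hs hsb
    obtain ⟨u, huS, hsu⟩ := exists_lt_of_lt_csSup ⟨0, h0S⟩ hsb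
    exact huS.2 s ⟨hs, hsu.le⟩
  have hfb : f b = 0 := by
    have hle := hstep 0 b le_rfl hb0 hf0
    have hint0 : (∫ s in (0:ℝ)..b, g s * f s) = 0 := by
      have hae : ∀ᵐ x ∂(volume : Measure ℝ), x ∈ Set.uIoc (0:ℝ) b → g x * f x = 0 := by
        have hsing : (volume : Measure ℝ) {b} = 0 := measure_singleton b
        filter_upwards [measure_eq_zero_iff_ae_notMem.mp hsing] with x hx hmem
        rw [Set.uIoc_of_le hb0] at hmem
        have hxb : x < b := lt_of_le_of_ne hmem.2 (by simpa using hx)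
        rw [hzero_lt x hmem.1.le hxb, mul_zero]
      rw [intervalIntegral.integral_congr_ae hae]
      simp
    have := hfnn b hb0
    linarith [hle, hint0.le]
  have hbeq : b = T := by
    by_contra hne
    have hbT' : b < T := lt_of_le_of_ne hbT hne
    -- continuity of primitive at b
    have hcont : ContinuousWithinAt (fun x => ∫ s in b..x, g s) (Set.Icc b T) b := by
      apply intervalIntegral.continuousWithinAt_primitive (measure_singleton b)
      apply hgint
    obtain ⟨δ, hδ, hδprop⟩ := Metric.continuousWithinAt_iff.mp hcont (1/2) (by norm_num)
    set t' := min (b + δ/2) T with ht'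
    have hbt' : b < t' := lt_min (by linarith) hbT'
    have ht'T : t' ≤ T := min_le_right _ _
    have ht'mem : t' ∈ Set.Icc b T := ⟨hbt'.le, ht'T⟩
    have hdist : dist t' b < δ := by
      rw [Real.dist_eq, abs_of_nonneg (by linarith [hbt'.le] : (0:ℝ) ≤ t' - b)]
      have : t' ≤ b + δ/2 := min_le_left _ _
      linarith
    have hsmall : (∫ s in b..t', g s) < 1/2 := by
      have := hδprop ht'mem hdist
      rw [Real.dist_eq] at this
      have h0 : (∫ s in b..b, g s) = 0 := intervalIntegral.integral_same
      rw [h0, sub_zero] at this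
      calc (∫ s in b..t', g s) ≤ |∫ s in b..t', g s| := le_abs_self _
        _ < 1/2 := this
    -- max of f on [b, t']
    obtain ⟨xm, hxm, hmax⟩ := isCompact_Icc.exists_isMaxOn (Set.nonempty_Icc.mpr hbt'.le)
      (hf.mono (fun x hx => le_trans hb0 hx.1 : Set.Icc b t' ⊆ Set.Ici 0))
    set M := f xm with hM
    have hM0 : 0 ≤ M := hfnn xm (le_trans hb0 hxm.1)
    have hfle : ∀ t ∈ Set.Icc b t', f t ≤ M / 2 := by
      intro t ht
      have h1 : f t ≤ ∫ s in b..t, g s * f s := hstep b t hb0 ht.1 hfb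
      have h2 : (∫ s in b..t, g s * f s) ≤ ∫ s in b..t, g s * M := by
        apply intervalIntegral.integral_mono_on ht.1
          (hgfint b t hb0 (le_trans hb0 ht.1)) ((hgint b t).mul_const M)
        intro x hx
        exact mul_le_mul_of_nonneg_left (hmax ⟨hx.1, le_trans hx.2 ht.2⟩)
          (hgnn x (le_trans hb0 hx.1))
      have h3 : (∫ s in b..t, g s * M) = (∫ s in b..t, g s) * M :=
        intervalIntegral.integral_mul_const M g
      have h4 : (∫ s in b..t, g s) ≤ ∫ s in b..t', g s := by
        have hsplit : (∫ s in b..t, g s) + (∫ s in t..t', g s) = ∫ s in b..t', g s :=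
          intervalIntegral.integral_add_adjacent_intervals (hgint b t) (hgint t t')
        have h5 : 0 ≤ ∫ s in t..t', g s :=
          intervalIntegral.integral_nonneg ht.2
            (fun u hu => hgnn u (le_trans (le_trans hb0 ht.1) hu.1))
        linarith
      have h6 : 0 ≤ ∫ s in b..t, g s :=
        intervalIntegral.integral_nonneg ht.1 (fun u hu => hgnn u (le_trans hb0 hu.1))
      calc f t ≤ (∫ s in b..t, g s) * M := by rw [← h3]; exact le_trans h1 h2
        _ ≤ (1/2) * M := mul_le_mul (le_of_lt (lt_of_le_of_lt h4 hsmall)) le_rfl hM0 (by norm_num)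
        _ = M / 2 := by ring
    have hMz : M ≤ 0 := by
      have := hfle xm hxm
      linarith
    have hzero' : ∀ t ∈ Set.Icc b t', f t = 0 := by
      intro t ht
      have := hfle t ht
      have := hfnn t (le_trans hb0 ht.1)
      linarith
    have ht'S : t' ∈ S := by
      refine ⟨⟨le_trans hb0 hbt'.le, ht'T⟩, fun s hs => ?_⟩
      rcases lt_or_ge s b with h | h
      · exact hzero_lt s hs.1 h
      · exact hzero' s ⟨h, hs.2⟩
    exact absurd (le_csSup hbdd ht'S) (not_le.mpr hbt')
  rw [← hbeq]; exact hfb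

/-- Comparison of fundamental matrices under entrywise domination
(Proposition 7): if F♯ is entrywise nonnegative and dominates ±F entrywise,
and A' = F·A, B' = F♯·B with A(0) = B(0) = I, then B(t) ⪰ A(t) ⪰ −B(t)
entrywise for all t ≥ 0; in particular B(t) dominates the entrywise absolute
value of A(t). -/
theorem stmt18 {m : ℕ}
    (F Fs : ℝ → Matrix (Fin m) (Fin m) ℝ)
    (A B : ℝ → Matrix (Fin m) (Fin m) ℝ)
    (hFint : ∀ T i j, IntervalIntegrable (fun t => F t i j) volume 0 T)
    (hFsint : ∀ T i j, IntervalIntegrable (fun t => Fs t i j) volume 0 T)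
    (hFs_nonneg : ∀ t, 0 ≤ t → ∀ i j, 0 ≤ Fs t i j)
    (hdom : ∀ t, 0 ≤ t → ∀ i j, |F t i j| ≤ Fs t i j)
    (hA : ∀ t, 0 ≤ t → ∀ i j, HasDerivAt (fun s => A s i j) ((F t * A t) i j) t)
    (hB : ∀ t, 0 ≤ t → ∀ i j, HasDerivAt (fun s => B s i j) ((Fs t * B t) i j) t)
    (hA0 : A 0 = 1) (hB0 : B 0 = 1) :
    ∀ t, 0 ≤ t → ∀ i j, |A t i j| ≤ B t i j := by
  -- the deficiency function
  set φ : ℝ → ℝ := fun t => ∑ p : Fin m × Fin m,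
    (max (-(B t p.1 p.2 - A t p.1 p.2)) 0 + max (-(B t p.1 p.2 + A t p.1 p.2)) 0) with hφ
  -- integrability of entries over arbitrary intervals
  have hF' : ∀ (i j) (a b : ℝ), IntervalIntegrable (fun t => F t i j) volume a b :=
    fun i j a b => (hFint a i j).symm.trans (hFint b i j)
  have hFs' : ∀ (i j) (a b : ℝ), IntervalIntegrable (fun t => Fs t i j) volume a b :=
    fun i j a b => (hFsint a i j).symm.trans (hFsint b i j)
  -- continuity of entries on Ici 0
  have hAc : ∀ i j, ContinuousOn (fun s => A s i j) (Set.Ici 0) :=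
    fun i j t ht => (hA t ht i j).continuousAt.continuousWithinAt
  have hBc : ∀ i j, ContinuousOn (fun s => B s i j) (Set.Ici 0) :=
    fun i j t ht => (hB t ht i j).continuousAt.continuousWithinAt
  have hφc : ContinuousOn φ (Set.Ici 0) := by
    apply continuousOn_finset_sum
    intro p _
    exact (((((hBc p.1 p.2).sub (hAc p.1 p.2)).neg).sup continuousOn_const).add
      ((((hBc p.1 p.2).add (hAc p.1 p.2)).neg).sup continuousOn_const))
  have hφnn : ∀ t, 0 ≤ φ t := by
    intro t
    apply Finset.sum_nonneg
    intro p _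
    positivity
  have hφ0 : φ 0 = 0 := by
    apply Finset.sum_eq_zero
    intro p _
    rw [hA0, hB0]
    rcases eq_or_ne p.1 p.2 with h | h <;>
      simp [Matrix.one_apply, h]
  -- single-term bounds
  have hterm1 : ∀ t i j, max (-(B t i j - A t i j)) 0 ≤ φ t := by
    intro t i j
    calc max (-(B t i j - A t i j)) 0
        ≤ max (-(B t i j - A t i j)) 0 + max (-(B t i j + A t i j)) 0 :=
          le_add_of_nonneg_right (by positivity)
      _ ≤ φ t := Finset.single_le_sum (f := fun p : Fin m × Fin m =>
            max (-(B t p.1 p.2 - A t p.1 p.2)) 0 + max (-(B t p.1 p.2 + A t p.1 p.2)) 0)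
            (fun p _ => by positivity) (Finset.mem_univ (i, j))
  have hterm2 : ∀ t i j, max (-(B t i j + A t i j)) 0 ≤ φ t := by
    intro t i j
    calc max (-(B t i j + A t i j)) 0
        ≤ max (-(B t i j - A t i j)) 0 + max (-(B t i j + A t i j)) 0 :=
          le_add_of_nonneg_left (by positivity)
      _ ≤ φ t := Finset.single_le_sum (f := fun p : Fin m × Fin m =>
            max (-(B t p.1 p.2 - A t p.1 p.2)) 0 + max (-(B t p.1 p.2 + A t p.1 p.2)) 0)
            (fun p _ => by positivity) (Finset.mem_univ (i, j))
  -- the comparison kernel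
  set K : ℝ → ℝ := fun s => ∑ p : Fin m × Fin m, Fs s p.1 p.2 with hK
  have hKnn : ∀ s, 0 ≤ s → 0 ≤ K s := fun s hs =>
    Finset.sum_nonneg fun p _ => hFs_nonneg s hs p.1 p.2
  have hKint : ∀ a b : ℝ, IntervalIntegrable K volume a b := by
    intro a b
    have h := IntervalIntegrable.sum (μ := volume) (a := a) (b := b) Finset.univ
      (f := fun p : Fin m × Fin m => fun t => Fs t p.1 p.2)
      (fun p _ => hFs' p.1 p.2 a b)
    have heq : (∑ p : Fin m × Fin m, fun t => Fs t p.1 p.2) = K := by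
      funext t; rw [hK]; simp
    rwa [heq] at h
  have hKrow : ∀ s, 0 ≤ s → ∀ i, (∑ k, Fs s i k) ≤ K s := by
    intro s hs i
    show (∑ k, Fs s i k) ≤ ∑ p : Fin m × Fin m, Fs s p.1 p.2
    rw [Fintype.sum_prod_type]
    exact Finset.single_le_sum (f := fun i' => ∑ k, Fs s i' k)
      (fun i' _ => Finset.sum_nonneg fun k _ => hFs_nonneg s hs i' k) (Finset.mem_univ i)
  -- uIcc inside Ici 0
  have huIcc : ∀ a c : ℝ, 0 ≤ a → 0 ≤ c → Set.uIcc a c ⊆ Set.Ici 0 := by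
    intro a c ha hc x hx
    exact le_trans (le_min ha hc) hx.1
  -- integrability of the derivative entries
  have hprodA : ∀ (i j) (a b : ℝ), 0 ≤ a → 0 ≤ b →
      IntervalIntegrable (fun s => (F s * A s) i j) volume a b := by
    intro i j a b ha hb
    have : (fun s => (F s * A s) i j) = fun s => ∑ k, F s i k * A s k j := by
      funext s; rw [Matrix.mul_apply]
    rw [this]
    have h := IntervalIntegrable.sum (μ := volume) (a := a) (b := b) Finset.univ
      (f := fun k : Fin m => fun s => F s i k * A s k j)
      (fun k _ => (hF' i k a b).mul_continuousOn ((hAc k j).mono (huIcc a b ha hb)))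
    have heq : (∑ k : Fin m, fun s => F s i k * A s k j)
        = fun s => ∑ k, F s i k * A s k j := by funext t; simp
    rwa [heq] at h
  have hprodB : ∀ (i j) (a b : ℝ), 0 ≤ a → 0 ≤ b →
      IntervalIntegrable (fun s => (Fs s * B s) i j) volume a b := by
    intro i j a b ha hb
    have : (fun s => (Fs s * B s) i j) = fun s => ∑ k, Fs s i k * B s k j := by
      funext s; rw [Matrix.mul_apply]
    rw [this]
    have h := IntervalIntegrable.sum (μ := volume) (a := a) (b := b) Finset.univ
      (f := fun k : Fin m => fun s => Fs s i k * B s k j)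
      (fun k _ => (hFs' i k a b).mul_continuousOn ((hBc k j).mono (huIcc a b ha hb)))
    have heq : (∑ k : Fin m, fun s => Fs s i k * B s k j)
        = fun s => ∑ k, Fs s i k * B s k j := by funext t; simp
    rwa [heq] at h
  have hKφint : ∀ a b : ℝ, 0 ≤ a → 0 ≤ b →
      IntervalIntegrable (fun s => K s * φ s) volume a b := by
    intro a b ha hb
    exact (hKint a b).mul_continuousOn (hφc.mono (huIcc a b ha hb))
  -- FTC for C = B - A and D = B + A entries
  have hftcC : ∀ (i j) (a t : ℝ), 0 ≤ a → a ≤ t →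
      (B t i j - A t i j) - (B a i j - A a i j) =
        ∫ s in a..t, ((Fs s * B s) i j - (F s * A s) i j) := by
    intro i j a t ha hat
    refine (intervalIntegral.integral_eq_sub_of_hasDerivAt
      (f := fun s => B s i j - A s i j)
      (f' := fun s => (Fs s * B s) i j - (F s * A s) i j) ?_ ?_).symm
    · intro x hx
      rw [Set.uIcc_of_le hat] at hx
      exact ((hB x (le_trans ha hx.1) i j).sub (hA x (le_trans ha hx.1) i j))
    · exact (hprodB i j a t ha (le_trans ha hat)).sub (hprodA i j a t ha (le_trans ha hat))
  have hftcD : ∀ (i j) (a t : ℝ), 0 ≤ a → a ≤ t →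
      (B t i j + A t i j) - (B a i j + A a i j) =
        ∫ s in a..t, ((Fs s * B s) i j + (F s * A s) i j) := by
    intro i j a t ha hat
    refine (intervalIntegral.integral_eq_sub_of_hasDerivAt
      (f := fun s => B s i j + A s i j)
      (f' := fun s => (Fs s * B s) i j + (F s * A s) i j) ?_ ?_).symm
    · intro x hx
      rw [Set.uIcc_of_le hat] at hx
      exact ((hB x (le_trans ha hx.1) i j).add (hA x (le_trans ha hx.1) i j))
    · exact (hprodB i j a t ha (le_trans ha hat)).add (hprodA i j a t ha (le_trans ha hat))
  -- pointwise lower bounds on the derivatives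
  have hlbC : ∀ s, 0 ≤ s → ∀ i j,
      -(K s * φ s) ≤ (Fs s * B s) i j - (F s * A s) i j := by
    intro s hs i j
    rw [Matrix.mul_apply, Matrix.mul_apply, ← Finset.sum_sub_distrib]
    have hst : ∀ k, -(Fs s i k * φ s) ≤ Fs s i k * B s k j - F s i k * A s k j := by
      intro k
      have h1 : -(φ s) ≤ B s k j - A s k j := by
        have := hterm1 s k j
        have := le_max_left (-(B s k j - A s k j)) 0
        linarith
      have h2 : -(φ s) ≤ B s k j + A s k j := by
        have := hterm2 s k j
        have := le_max_left (-(B s k j + A s k j)) 0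
        linarith
      obtain ⟨hd1, hd2⟩ := abs_le.mp (hdom s hs i k)
      have hfsnn := hFs_nonneg s hs i k
      nlinarith [mul_nonneg (by linarith : (0:ℝ) ≤ Fs s i k + F s i k) (by linarith : (0:ℝ) ≤ B s k j - A s k j + φ s),
        mul_nonneg (by linarith : (0:ℝ) ≤ Fs s i k - F s i k) (by linarith : (0:ℝ) ≤ B s k j + A s k j + φ s)]
    calc -(K s * φ s) ≤ -((∑ k, Fs s i k) * φ s) := by
          have := mul_le_mul_of_nonneg_right (hKrow s hs i) (hφnn s)
          linarith
      _ = ∑ k, -(Fs s i k * φ s) := by rw [Finset.sum_mul, ← Finset.sum_neg_distrib]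
      _ ≤ ∑ k, (Fs s i k * B s k j - F s i k * A s k j) := Finset.sum_le_sum fun k _ => hst k
  have hlbD : ∀ s, 0 ≤ s → ∀ i j,
      -(K s * φ s) ≤ (Fs s * B s) i j + (F s * A s) i j := by
    intro s hs i j
    rw [Matrix.mul_apply, Matrix.mul_apply, ← Finset.sum_add_distrib]
    have hst : ∀ k, -(Fs s i k * φ s) ≤ Fs s i k * B s k j + F s i k * A s k j := by
      intro k
      have h1 : -(φ s) ≤ B s k j - A s k j := by
        have := hterm1 s k j
        have := le_max_left (-(B s k j - A s k j)) 0
        linarith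
      have h2 : -(φ s) ≤ B s k j + A s k j := by
        have := hterm2 s k j
        have := le_max_left (-(B s k j + A s k j)) 0
        linarith
      obtain ⟨hd1, hd2⟩ := abs_le.mp (hdom s hs i k)
      have hfsnn := hFs_nonneg s hs i k
      nlinarith [mul_nonneg (by linarith : (0:ℝ) ≤ Fs s i k - F s i k) (by linarith : (0:ℝ) ≤ B s k j - A s k j + φ s),
        mul_nonneg (by linarith : (0:ℝ) ≤ Fs s i k + F s i k) (by linarith : (0:ℝ) ≤ B s k j + A s k j + φ s)]
    calc -(K s * φ s) ≤ -((∑ k, Fs s i k) * φ s) := by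
          have := mul_le_mul_of_nonneg_right (hKrow s hs i) (hφnn s)
          linarith
      _ = ∑ k, -(Fs s i k * φ s) := by rw [Finset.sum_mul, ← Finset.sum_neg_distrib]
      _ ≤ ∑ k, (Fs s i k * B s k j + F s i k * A s k j) := Finset.sum_le_sum fun k _ => hst k
  -- the key Grönwall step for φ with kernel g = 2 m² K
  set g : ℝ → ℝ := fun s => (2 * (m:ℝ)^2) * K s with hg
  have hgnn : ∀ s, 0 ≤ s → 0 ≤ g s := fun s hs => by
    have := hKnn s hs; positivity
  have hgint : ∀ a b : ℝ, IntervalIntegrable g volume a b := fun a b =>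
    (hKint a b).const_mul _
  have hstep : ∀ a t, 0 ≤ a → a ≤ t → φ a = 0 → φ t ≤ ∫ s in a..t, g s * φ s := by
    intro a t ha hat hφa
    have ht0 : 0 ≤ t := le_trans ha hat
    have hφs_nn_on : ∀ x ∈ Set.Icc a t, 0 ≤ K x * φ x := fun x hx =>
      mul_nonneg (hKnn x (le_trans ha hx.1)) (hφnn x)
    have hInt_nn : 0 ≤ ∫ s in a..t, K s * φ s :=
      intervalIntegral.integral_nonneg hat hφs_nn_on
    -- the two per-entry estimates
    have hboundC : ∀ i j, max (-(B t i j - A t i j)) 0 ≤ ∫ s in a..t, K s * φ s := by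
      intro i j
      have hCa : 0 ≤ B a i j - A a i j := by
        have h1 := hterm1 a i j
        have h2 := le_max_left (-(B a i j - A a i j)) (0:ℝ)
        linarith [hφa.le]
      have hmono : (∫ s in a..t, -(K s * φ s)) ≤
          ∫ s in a..t, ((Fs s * B s) i j - (F s * A s) i j) := by
        apply intervalIntegral.integral_mono_on hat ((hKφint a t ha ht0).neg)
          ((hprodB i j a t ha ht0).sub (hprodA i j a t ha ht0))
        intro x hx
        exact hlbC x (le_trans ha hx.1) i j
      rw [intervalIntegral.integral_neg] at hmono
      have hC := hftcC i j a t ha hat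
      have : -(B t i j - A t i j) ≤ ∫ s in a..t, K s * φ s := by linarith
      exact max_le this hInt_nn
    have hboundD : ∀ i j, max (-(B t i j + A t i j)) 0 ≤ ∫ s in a..t, K s * φ s := by
      intro i j
      have hDa : 0 ≤ B a i j + A a i j := by
        have h1 := hterm2 a i j
        have h2 := le_max_left (-(B a i j + A a i j)) (0:ℝ)
        linarith [hφa.le]
      have hmono : (∫ s in a..t, -(K s * φ s)) ≤
          ∫ s in a..t, ((Fs s * B s) i j + (F s * A s) i j) := by
        apply intervalIntegral.integral_mono_on hat ((hKφint a t ha ht0).neg)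
          ((hprodB i j a t ha ht0).add (hprodA i j a t ha ht0))
        intro x hx
        exact hlbD x (le_trans ha hx.1) i j
      rw [intervalIntegral.integral_neg] at hmono
      have hD := hftcD i j a t ha hat
      have : -(B t i j + A t i j) ≤ ∫ s in a..t, K s * φ s := by linarith
      exact max_le this hInt_nn
    calc φ t ≤ ∑ _p : Fin m × Fin m,
          ((∫ s in a..t, K s * φ s) + (∫ s in a..t, K s * φ s)) :=
          Finset.sum_le_sum fun p _ => add_le_add (hboundC p.1 p.2) (hboundD p.1 p.2)
      _ = (2 * (m:ℝ)^2) * ∫ s in a..t, K s * φ s := by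
          rw [Finset.sum_const, Finset.card_univ, Fintype.card_prod, Fintype.card_fin,
            nsmul_eq_mul]
          push_cast
          ring
      _ = ∫ s in a..t, (2 * (m:ℝ)^2) * (K s * φ s) :=
          (intervalIntegral.integral_const_mul _ _).symm
      _ = ∫ s in a..t, g s * φ s := by
          apply intervalIntegral.integral_congr
          intro x _
          simp only [hg]
          ring
  -- apply the Grönwall-type lemma
  have hφzero : ∀ t, 0 ≤ t → φ t = 0 := gron_aux hφc hφ0 (fun t _ => hφnn t) hgint hgnn hstep
  intro t ht i j
  have hz := hφzero t ht
  have h1 : max (-(B t i j - A t i j)) 0 ≤ 0 := by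
    have h := hterm1 t i j; rwa [hz] at h
  have h2 : max (-(B t i j + A t i j)) 0 ≤ 0 := by
    have h := hterm2 t i j; rwa [hz] at h
  have h1' : -(B t i j - A t i j) ≤ 0 := le_trans (le_max_left _ _) h1
  have h2' : -(B t i j + A t i j) ≤ 0 := le_trans (le_max_left _ _) h2
  exact abs_le.mpr ⟨by linarith, by linarith⟩
end
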